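/- Tau Manipulation (amplification form): Let A = Σ_{k∈V_R} W_{ik}(x_i + Clip(x_k − x_i, τ_i)) and C = Σ_{k∈V_R} W_{ik} Clip(x_k − x_i, τ_i). Suppose every Byzantine user b ∈ V_B sends to user i the vector x_b = x_i + A, and let W_B = Σ_{b∈V_B} W_{ib}. If ‖A‖ ≤ τ_i, then the aggregated update satisfies SCClip_i(x_1, …, x_n; τ_i) = x_i + C + W_B·A; i.e., the honest aggregate's contribution is added a second time, scaled by the Byzantine weight, increasing the deviation of user i from its honest neighbors. -/
import Mathlib


open Finset

/-- Norm clipping: `Clip z τ = min 1 (τ/‖z‖) • z` (with `Clip 0 τ = 0`).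
Note `Clip z τ = z` whenever `‖z‖ ≤ τ`. -/
noncomputable def Clip {d : ℕ} (z : EuclideanSpace ℝ (Fin d)) (τ : ℝ) :
    EuclideanSpace ℝ (Fin d) :=
  (min 1 (τ / ‖z‖)) • z

/-- Self-centered clipping aggregation of user `i` (own vector `xi`) over
the user set `V` with weights `W` and radius `τ`:
`SCClip_i(x₁,…,xₙ; τ) = ∑_{j∈V} W_{ij} (x_i + Clip(x_j − x_i, τ))`. -/
noncomputable def SCClip {ι : Type*} {d : ℕ} (V : Finset ι) (W : ι → ℝ)
    (xi : EuclideanSpace ℝ (Fin d)) (x : ι → EuclideanSpace ℝ (Fin d)) (τ : ℝ) :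
    EuclideanSpace ℝ (Fin d) :=
  ∑ j ∈ V, W j • (xi + Clip (x j - xi) τ)

lemma Clip_of_norm_le {d : ℕ} {z : EuclideanSpace ℝ (Fin d)} {τ : ℝ}
    (h : ‖z‖ ≤ τ) : Clip z τ = z := by
  rcases eq_or_ne z 0 with rfl | hz
  · simp [Clip]
  · have hz' : 0 < ‖z‖ := norm_pos_iff.mpr hz
    have : (1 : ℝ) ≤ τ / ‖z‖ := (one_le_div hz').mpr h
    simp [Clip, min_eq_left this]

/-- Tau Manipulation (amplification form): the honest aggregate's contribution
is added a second time, scaled by the Byzantine weight. -/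
theorem tau_manipulation_amplification {ι : Type*} [DecidableEq ι] {d : ℕ}
    (V VR : Finset ι) (hVR : VR ⊆ V)
    (W : ι → ℝ) (hW0 : ∀ j ∈ V, 0 ≤ W j) (hW1 : ∑ j ∈ V, W j = 1)
    (i : ι) (hi : i ∈ VR) (τ : ℝ) (hτ : 0 ≤ τ)
    (x : ι → EuclideanSpace ℝ (Fin d))
    (A : EuclideanSpace ℝ (Fin d))
    (hA : A = ∑ k ∈ VR, W k • (x i + Clip (x k - x i) τ))
    (C : EuclideanSpace ℝ (Fin d)) (hC : C = ∑ k ∈ VR, W k • Clip (x k - x i) τ)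
    (WB : ℝ) (hWB : WB = ∑ b ∈ V \ VR, W b)
    (hsend : ∀ b ∈ V \ VR, x b = x i + A)
    (hnoclipB : ‖A‖ ≤ τ) :
    SCClip V W (x i) x τ = x i + C + WB • A := by
  have hWR : (∑ k ∈ VR, W k) = 1 - WB := by
    have := Finset.sum_sdiff hVR (f := W)
    rw [hW1] at this
    rw [hWB]; linarith
  have hA' : A = (1 - WB) • x i + C := by
    rw [hA, hC]
    rw [← hWR]
    simp only [smul_add]
    rw [Finset.sum_add_distrib, Finset.sum_smul]
  have hclipA : Clip A τ = A := Clip_of_norm_le hnoclipB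
  have hsplit : SCClip V W (x i) x τ =
      (∑ k ∈ VR, W k • (x i + Clip (x k - x i) τ)) +
      ∑ b ∈ V \ VR, W b • (x i + Clip (x b - x i) τ) := by
    rw [SCClip, ← Finset.sum_sdiff hVR, add_comm]
  have hB : ∀ b ∈ V \ VR, W b • (x i + Clip (x b - x i) τ) = W b • (x i + A) := by
    intro b hb
    rw [hsend b hb]
    simp [hclipA]
  rw [hsplit, Finset.sum_congr rfl hB, ← hA]
  have : (∑ b ∈ V \ VR, W b • (x i + A)) = WB • (x i + A) := by
    rw [← Finset.sum_smul, ← hWB]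
  rw [this, hA']
  simp only [smul_add, sub_smul, one_smul]
  abel
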